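/- Let V be a Hausdorff locally convex real topological vector space, K ⊆ V a nonempty compact convex set, and S and T reflections of K. Set K₁ = K_T ∩ S(K_T), where K_T = {p ∈ K : T(p) = p}. Then K₁ is nonempty and S(K₁) = K₁. -/

import Mathlib

/-!
Conjugating `T` by `S` gives a second reflection `U = S ∘ T ∘ S` of `K`. The continuous
affine self-map `T ∘ U` of `K` has a fixed point `x` by the Markov–Kakutani argument: for
such a map `f`, the dyadic averages `Aₙ` of its iterates satisfy
`f (Aₙ y) - Aₙ y = 2⁻ⁿ • (f^[2ⁿ] y - y)`, so a point of the nested compact sets `Aₙ '' K` is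
fixed. From `T (U x) = x` we get `U x = T x`, and then the midpoint `q` of `x` and `T x` is
fixed by both `T` and `U`; thus `q` and `S q` lie in `K_T`, so `q ∈ K_T ∩ S(K_T)`. Any set of
the form `A ∩ S(A)` is invariant under the involution `S`.
-/

/-- `T` is affine on `K`: it preserves convex combinations of points of `K`. -/
def IsAffineOn {V : Type*} [AddCommGroup V] [Module ℝ V] (T : V → V) (K : Set V) : Prop :=
  ∀ x ∈ K, ∀ y ∈ K, ∀ t : ℝ, 0 ≤ t → t ≤ 1 →
    T (t • x + (1 - t) • y) = t • T x + (1 - t) • T y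

/-- `T` is a reflection of `K`: a continuous affine self-map of `K` with `T ∘ T = id`
on `K` (hence an affine homeomorphism of `K` onto `K`, its own inverse). -/
def IsReflection {V : Type*} [AddCommGroup V] [Module ℝ V] [TopologicalSpace V]
    (T : V → V) (K : Set V) : Prop :=
  Set.MapsTo T K K ∧ ContinuousOn T K ∧ IsAffineOn T K ∧ ∀ p ∈ K, T (T p) = p

open Set Filter Function Topology Bornology
open scoped Pointwise

section Affine

variable {V : Type*} [AddCommGroup V] [Module ℝ V] {f g : V → V} {K L : Set V}

lemma IsAffineOn.comp (hg : IsAffineOn g L) (hf : IsAffineOn f K) (hfK : MapsTo f K L) :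
    IsAffineOn (g ∘ f) K := by
  intro x hx y hy t ht₀ ht₁
  simp only [comp_apply, hf x hx y hy t ht₀ ht₁, hg _ (hfK hx) _ (hfK hy) t ht₀ ht₁]

lemma IsAffineOn.iterate (hf : IsAffineOn f K) (hfK : MapsTo f K K) : ∀ n, IsAffineOn f^[n] K
  | 0 => fun _ _ _ _ _ _ _ => rfl
  | n + 1 => by
    rw [iterate_succ']
    exact hf.comp (hf.iterate hfK n) (hfK.iterate n)

lemma IsAffineOn.map_midpoint (hf : IsAffineOn f K) {x y : V} (hx : x ∈ K) (hy : y ∈ K) :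
    f (midpoint ℝ x y) = midpoint ℝ (f x) (f y) := by
  have h := hf x hx y hy 2⁻¹ (by norm_num) (by norm_num)
  rw [show (1 - 2⁻¹ : ℝ) = 2⁻¹ by norm_num, ← smul_add, ← smul_add] at h
  simpa only [midpoint_eq_smul_add, invOf_eq_inv] using h

end Affine

lemma Bornology.IsVonNBounded.eq_zero_of_forall_mem_smul {𝕜 E : Type*} [NormedField 𝕜]
    [AddCommGroup E] [Module 𝕜 E] [TopologicalSpace E] [T2Space E] {D : Set E}
    (hD : IsVonNBounded 𝕜 D) {ι : Type*} {l : Filter ι} [l.NeBot] {ε : ι → 𝕜}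
    (hε : Tendsto ε l (𝓝 0)) {v : E} (hv : ∀ i, v ∈ ε i • D) : v = 0 := by
  choose d hdD hd using hv
  exact tendsto_nhds_unique tendsto_const_nhds
    ((hD.smul_tendsto_zero (.of_forall hdD) hε).congr hd)

/-- For affine `f`, `dyadicAverage f n x` is the average of the `f^[k] x` over `k < 2 ^ n`. -/
noncomputable def dyadicAverage {V : Type*} [AddCommGroup V] [Module ℝ V] (f : V → V) :
    ℕ → V → V
  | 0 => id
  | n + 1 => dyadicAverage f n ∘ fun x => midpoint ℝ x (f^[2 ^ n] x)

section MarkovKakutani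

variable {V : Type*} [AddCommGroup V] [Module ℝ V] {f : V → V} {K : Set V}

lemma image_dyadicAverage_succ_subset (hK : Convex ℝ K) (hfK : MapsTo f K K) (n : ℕ) :
    dyadicAverage f (n + 1) '' K ⊆ dyadicAverage f n '' K := by
  rw [dyadicAverage, image_comp]
  exact image_mono (MapsTo.image_subset fun _ hx ↦ hK.midpoint_mem hx (hfK.iterate _ hx))

lemma apply_dyadicAverage_sub (hK : Convex ℝ K) (hfK : MapsTo f K K) (hf : IsAffineOn f K) :
    ∀ n, ∀ y ∈ K, f (dyadicAverage f n y) - dyadicAverage f n y =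
      ((2 : ℝ) ^ n)⁻¹ • (f^[2 ^ n] y - y)
  | 0, y, _ => by simp [dyadicAverage]
  | n + 1, y, hy => by
    have hgy : f^[2 ^ n] y ∈ K := hfK.iterate _ hy
    rw [dyadicAverage, comp_apply, apply_dyadicAverage_sub hK hfK hf n _ (hK.midpoint_mem hy hgy),
      (hf.iterate hfK _).map_midpoint hy hgy, Nat.pow_succ, Nat.mul_two, iterate_add_apply]
    simp only [midpoint_eq_smul_add, invOf_eq_inv]
    module

variable [TopologicalSpace V] [IsTopologicalAddGroup V] [ContinuousSMul ℝ V]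

lemma continuousOn_dyadicAverage (hK : Convex ℝ K) (hfK : MapsTo f K K) (hf : ContinuousOn f K) :
    ∀ n, ContinuousOn (dyadicAverage f n) K
  | 0 => continuousOn_id
  | n + 1 => (continuousOn_dyadicAverage hK hfK hf n).comp
      (fun x hx ↦ continuousWithinAt_id.midpoint (hf.iterate hfK _ x hx))
      fun _ hx ↦ hK.midpoint_mem hx (hfK.iterate _ hx)

theorem exists_fixedPoint_of_isAffineOn [T2Space V] (hne : K.Nonempty) (hcomp : IsCompact K)
    (hK : Convex ℝ K) (hfK : MapsTo f K K) (hcont : ContinuousOn f K) (hf : IsAffineOn f K) :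
    ∃ x ∈ K, f x = x := by
  have hcomp_avg n : IsCompact (dyadicAverage f n '' K) :=
    hcomp.image_of_continuousOn (continuousOn_dyadicAverage hK hfK hcont n)
  obtain ⟨x, hx⟩ : (⋂ n, dyadicAverage f n '' K).Nonempty :=
    IsCompact.nonempty_iInter_of_sequence_nonempty_isCompact_isClosed _
      (image_dyadicAverage_succ_subset hK hfK) (fun _ ↦ hne.image _) (hcomp_avg 0)
      fun n ↦ (hcomp_avg n).isClosed
  rw [mem_iInter] at hx
  refine ⟨x, by simpa [dyadicAverage] using hx 0, sub_eq_zero.1 ?_⟩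
  refine ((hcomp.isVonNBounded ℝ).sub (hcomp.isVonNBounded ℝ)).eq_zero_of_forall_mem_smul
    (tendsto_inv_atTop_zero.comp (tendsto_pow_atTop_atTop_of_one_lt one_lt_two)) fun n ↦ ?_
  obtain ⟨y, hy, rfl⟩ := hx n
  rw [apply_dyadicAverage_sub hK hfK hf n y hy]
  exact smul_mem_smul_set (sub_mem_sub (hfK.iterate _ hy) hy)

end MarkovKakutani

section Reflection

variable {V : Type*} [AddCommGroup V] [Module ℝ V] {K : Set V}

lemma isFixedPt_midpoint_of_isFixedPt_comp {T U : V → V} (hTK : MapsTo T K K)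
    (hT : IsAffineOn T K) (hTT : LeftInvOn T T K) (hUK : MapsTo U K K) (hU : IsAffineOn U K)
    (hUU : LeftInvOn U U K)
    {x : V} (hx : x ∈ K) (hxTU : IsFixedPt (T ∘ U) x) :
    IsFixedPt T (midpoint ℝ x (T x)) ∧ IsFixedPt U (midpoint ℝ x (T x)) := by
  have hUx : U x = T x := calc
    U x = T (T (U x)) := (hTT (hUK hx)).symm
    _ = T x := congrArg T hxTU
  refine ⟨?_, ?_⟩
  · rw [IsFixedPt, hT.map_midpoint hx (hTK hx), hTT hx, midpoint_comm]
  · rw [IsFixedPt, hU.map_midpoint hx (hTK hx), ← hUx, hUU hx, hUx, midpoint_comm]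

variable [TopologicalSpace V]

lemma IsReflection.conj {S T : V → V} (hS : IsReflection S K) (hT : IsReflection T K) :
    IsReflection (S ∘ T ∘ S) K := by
  obtain ⟨hSK, hScont, hSaff, hSS⟩ := hS
  obtain ⟨hTK, hTcont, hTaff, hTT⟩ := hT
  refine ⟨hSK.comp (hTK.comp hSK), hScont.comp (hTcont.comp hScont hSK) (hTK.comp hSK),
    hSaff.comp (hTaff.comp hSaff hSK) (hTK.comp hSK), fun p hp ↦ ?_⟩
  simp only [comp_apply, hSS _ (hTK (hSK hp)), hTT _ (hSK hp), hSS p hp]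

theorem IsReflection.exists_common_fixedPoint [IsTopologicalAddGroup V] [ContinuousSMul ℝ V]
    [T2Space V] {T U : V → V} (hT : IsReflection T K) (hU : IsReflection U K) (hne : K.Nonempty)
    (hcomp : IsCompact K) (hK : Convex ℝ K) : ∃ q ∈ K, T q = q ∧ U q = q := by
  obtain ⟨hTK, hTcont, hTaff, hTT⟩ := hT
  obtain ⟨hUK, hUcont, hUaff, hUU⟩ := hU
  obtain ⟨x, hx, hxTU⟩ := exists_fixedPoint_of_isAffineOn hne hcomp hK (hTK.comp hUK)
    (hTcont.comp hUcont hUK) (hTaff.comp hUaff hUK)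
  exact ⟨_, hK.midpoint_mem hx (hTK hx),
    isFixedPt_midpoint_of_isFixedPt_comp hTK hTaff hTT hUK hUaff hUU hx hxTU⟩

end Reflection

lemma Set.LeftInvOn.image_inter_image_eq {α : Type*} {S : α → α} {K A : Set α}
    (hS : LeftInvOn S S K) (hA : A ⊆ K) : S '' (A ∩ S '' A) = A ∩ S '' A := by
  have hinv : LeftInvOn S S (A ∩ S '' A) := hS.mono (inter_subset_left.trans hA)
  have hmaps : MapsTo S (A ∩ S '' A) (A ∩ S '' A) := by
    rintro _ ⟨hSa, a, ha, rfl⟩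
    rw [hS (hA ha)]
    exact ⟨ha, S a, hSa, hS (hA ha)⟩
  exact (InvOn.bijOn ⟨hinv, hinv⟩ hmaps hmaps).image_eq

theorem fixedSet_inter_image_nonempty_and_invariant_general
    {V : Type*} [AddCommGroup V] [Module ℝ V] [TopologicalSpace V]
    [IsTopologicalAddGroup V] [ContinuousSMul ℝ V] [T2Space V]
    (K : Set V) (hne : K.Nonempty) (hcomp : IsCompact K) (hconv : Convex ℝ K)
    (S T : V → V) (hS : IsReflection S K) (hT : IsReflection T K) :
    ({p ∈ K | T p = p} ∩ S '' {p ∈ K | T p = p}).Nonempty ∧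
      S '' ({p ∈ K | T p = p} ∩ S '' {p ∈ K | T p = p}) =
        {p ∈ K | T p = p} ∩ S '' {p ∈ K | T p = p} := by
  obtain ⟨q, hqK, hTq, hSTSq⟩ := hT.exists_common_fixedPoint (hS.conj hT) hne hcomp hconv
  obtain ⟨hSK, -, -, hSS⟩ := hS
  have hTSq : T (S q) = S q := calc
    T (S q) = S (S (T (S q))) := (hSS _ (hT.1 (hSK hqK))).symm
    _ = S q := congrArg S hSTSq
  exact ⟨⟨q, ⟨hqK, hTq⟩, S q, ⟨hSK hqK, hTSq⟩, hSS q hqK⟩,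
    LeftInvOn.image_inter_image_eq hSS (sep_subset _ _)⟩

/-- If `S` and `T` are reflections of a nonempty compact convex set `K` and
`K₁ = K_T ∩ S(K_T)` where `K_T` is the fixed point set of `T`, then `K₁` is nonempty
and invariant under `S`, i.e. `S(K₁) = K₁`. -/
theorem fixedSet_inter_image_nonempty_and_invariant
    {V : Type*} [AddCommGroup V] [Module ℝ V] [TopologicalSpace V]
    [IsTopologicalAddGroup V] [ContinuousSMul ℝ V] [T2Space V] [LocallyConvexSpace ℝ V]
    (K : Set V) (hne : K.Nonempty) (hcomp : IsCompact K) (hconv : Convex ℝ K)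
    (S T : V → V) (hS : IsReflection S K) (hT : IsReflection T K) :
    ({p ∈ K | T p = p} ∩ S '' {p ∈ K | T p = p}).Nonempty ∧
      S '' ({p ∈ K | T p = p} ∩ S '' {p ∈ K | T p = p}) =
        {p ∈ K | T p = p} ∩ S '' {p ∈ K | T p = p} :=
  fixedSet_inter_image_nonempty_and_invariant_general K hne hcomp hconv S T hS hT
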